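/- arXiv:2107.13288 — 2 statements merged into one kernel-verified Lean document; each statement's English description precedes it below -/
import Mathlib

section
/- The fixed point set of τ̄_h in the positive tube domain satisfies {z ∈ 𝒯_M⁺ : τ̄_h(z) = z} = {g·(cosh(t)·e₀ + i·sinh(t)·e₁) : g ∈ G^{τ_h}, t > 0}. -/
noncomputable section

/-- `V = ℝ^{d+1}`. -/
abbrev Vd (d : ℕ) : Type := Fin (d + 1) → ℝ

/-- The symmetric bilinear form `β(x,y) = x₀y₀ + x₁y₁ − x₂y₂ − ⋯ − x_dy_d`. -/
def betaB (d : ℕ) (x y : Vd d) : ℝ :=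
  ∑ j : Fin (d + 1), (if (j : ℕ) ≤ 1 then (1 : ℝ) else -1) * x j * y j

abbrev Mat (d : ℕ) : Type := Matrix (Fin (d + 1)) (Fin (d + 1)) ℝ

/-- The group `O(β)` of linear automorphisms of `V` preserving `β`,
as a set of matrices (with the subspace topology of `End(V)`). -/
def Obeta (d : ℕ) : Set (Mat d) :=
  {g | IsUnit g ∧ ∀ x y : Vd d, betaB d (g.mulVec x) (g.mulVec y) = betaB d x y}

/-- `G = SO_{2,d-1}(ℝ)_e`, the identity component of `O(β)`. -/
def Gset (d : ℕ) : Set (Mat d) := connectedComponentIn (Obeta d) 1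

/-- Anti-de Sitter space `AdS^d = {x : β(x,x) = 1}`. -/
def AdS (d : ℕ) : Set (Vd d) := {x | betaB d x x = 1}

/-- Standard basis vector `e_i`. -/
def evec (d : ℕ) (i : Fin (d + 1)) : Vd d := fun j => if j = i then 1 else 0

/-- The positive causal cone `V₊(e₀)` at the base point. -/
def Vplus (d : ℕ) : Set (Vd d) :=
  {v | betaB d (evec d 0) v = 0 ∧ 0 < betaB d v v ∧ 0 < betaB d v (evec d 1)}

/-- A pair `(x,y)` with `x ∈ M`, `β(x,y) = 0` is positive if some `g ∈ G`
moves it into the positive cone at the base point. -/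
def posPair (d : ℕ) (x y : Vd d) : Prop :=
  ∃ g ∈ Gset d, g.mulVec x = evec d 0 ∧ g.mulVec y ∈ Vplus d

/-- Representing `z = x + iy ∈ V_ℂ` as the pair `(x,y)`: the set
`M_ℂ ∩ (V + i V_{>0})`. -/
def TubeSrc (d : ℕ) : Set (Vd d × Vd d) :=
  {p | betaB d p.1 p.1 - betaB d p.2 p.2 = 1 ∧ betaB d p.1 p.2 = 0 ∧ 0 < betaB d p.2 p.2}

/-- The positive tube domain `𝒯_M⁺`: those `z = x + iy` in `M_ℂ ∩ 𝒯_V` for which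
`Γ(z) = β(x,x)^{-1/2}(x,y)` is a positive pair. -/
def TubePlus (d : ℕ) : Set (Vd d × Vd d) :=
  {p | p ∈ TubeSrc d ∧
    posPair d ((Real.sqrt (betaB d p.1 p.1))⁻¹ • p.1) ((Real.sqrt (betaB d p.1 p.1))⁻¹ • p.2)}

/-- The involution `τ_h = diag(1,−1,−1,1,…,1)`. -/
def tauh (d : ℕ) : Mat d :=
  Matrix.diagonal fun j : Fin (d + 1) => if (j : ℕ) = 1 ∨ (j : ℕ) = 2 then (-1 : ℝ) else 1

/-- The Euler element `h` with `h e₁ = e₂`, `h e₂ = e₁`, `h e_j = 0` otherwise. -/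
def hmat (d : ℕ) : Mat d :=
  Matrix.of fun i j : Fin (d + 1) =>
    if ((i : ℕ) = 1 ∧ (j : ℕ) = 2) ∨ ((i : ℕ) = 2 ∧ (j : ℕ) = 1) then (1 : ℝ) else 0

/-- The centralizer `G^h = {g ∈ G : gh = hg}`. -/
def Gh (d : ℕ) : Set (Mat d) := {g ∈ Gset d | g * hmat d = hmat d * g}

/-- The positivity domain `W_M⁺(h) = {x ∈ M : (x, hx) is positive}`. -/
def WplusDom (d : ℕ) : Set (Vd d) := {x ∈ AdS d | posPair d x ((hmat d).mulVec x)}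

/-- `α_{it}(x) = (x₀, cos t·x₁ + i sin t·x₂, cos t·x₂ + i sin t·x₁, x₃, …, x_d)`,
written as a pair (real part, imaginary part). -/
def alphaIt (d : ℕ) (t : ℝ) (x : Vd d) : Vd d × Vd d :=
  (fun j => if (j : ℕ) = 1 ∨ (j : ℕ) = 2 then Real.cos t * x j else x j,
   fun j => if (j : ℕ) = 1 then Real.sin t * x 2
            else if (j : ℕ) = 2 then Real.sin t * x 1 else 0)

/-- The KMS wedge domain `W_M^{KMS}(h)`. -/
def KMSdom (d : ℕ) : Set (Vd d) :=
  {x ∈ AdS d | ∀ t : ℝ, 0 < t → t < Real.pi → alphaIt d t x ∈ TubePlus d}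

/-!
A fixed point `z = x + iy` of `τ̄_h` has `x` in the `+1`- and `y` in the `-1`-eigenspace of `τ_h`,
and `β(x,x) - β(y,y) = 1` lets us write `x = cosh t • u`, `y = sinh t • v` with `β`-unit vectors
`u`, `v`. Boosts inside each eigenspace commute with `τ_h` and move `e₀` to `u` and `e₁` to `v` as
soon as `u₀ > 0` and `v₁ > 0`; the rotation by `π` in the `(e₀, e₁)`-plane handles the case where
both are negative. The mixed case is excluded by positivity: for an orthogonal pair of `β`-positive
vectors the minor `x₀y₁ - x₁y₀` never vanishes, so its sign is constant along the connected
group `G`, and it is positive at `(e₀, V₊(e₀))`.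
-/

open Matrix

section Form

variable {d : ℕ}

def betaSign (d : ℕ) (j : Fin (d + 1)) : ℝ := if (j : ℕ) ≤ 1 then 1 else -1

def Jmat (d : ℕ) : Mat d := diagonal (betaSign d)

lemma betaB_eq_dotProduct (x y : Vd d) : betaB d x y = x ⬝ᵥ (Jmat d *ᵥ y) := by
  simp only [betaB, Jmat, mulVec_diagonal, dotProduct, betaSign]
  exact Finset.sum_congr rfl fun j _ => by ring

lemma betaB_comm (x y : Vd d) : betaB d x y = betaB d y x := by
  simp only [betaB]
  exact Finset.sum_congr rfl fun j _ => by ring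

@[simp] lemma betaB_add_left (x y z : Vd d) : betaB d (x + y) z = betaB d x z + betaB d y z := by
  simp only [betaB_eq_dotProduct, add_dotProduct]

@[simp] lemma betaB_add_right (x y z : Vd d) : betaB d x (y + z) = betaB d x y + betaB d x z := by
  simp only [betaB_eq_dotProduct, mulVec_add, dotProduct_add]

@[simp] lemma betaB_smul_left (r : ℝ) (x y : Vd d) : betaB d (r • x) y = r * betaB d x y := by
  simp only [betaB_eq_dotProduct, smul_dotProduct, smul_eq_mul]

@[simp] lemma betaB_smul_right (r : ℝ) (x y : Vd d) : betaB d x (r • y) = r * betaB d x y := by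
  simp only [betaB_eq_dotProduct, mulVec_smul, dotProduct_smul, smul_eq_mul]

@[simp] lemma betaB_neg_left (x y : Vd d) : betaB d (-x) y = -betaB d x y := by
  simp only [betaB_eq_dotProduct, neg_dotProduct]

@[simp] lemma betaB_neg_right (x y : Vd d) : betaB d x (-y) = -betaB d x y := by
  simp only [betaB_eq_dotProduct, mulVec_neg, dotProduct_neg]

@[simp] lemma betaB_sub_left (x y z : Vd d) : betaB d (x - y) z = betaB d x z - betaB d y z := by
  simp only [betaB_eq_dotProduct, sub_dotProduct]

@[simp] lemma betaB_sub_right (x y z : Vd d) : betaB d x (y - z) = betaB d x y - betaB d x z := by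
  simp only [betaB_eq_dotProduct, mulVec_sub, dotProduct_sub]

lemma betaB_evec_left (i : Fin (d + 1)) (v : Vd d) :
    betaB d (evec d i) v = betaSign d i * v i := by
  simp [betaB_eq_dotProduct, evec, Jmat, mulVec_diagonal, dotProduct]

lemma betaB_evec_right (i : Fin (d + 1)) (v : Vd d) :
    betaB d v (evec d i) = betaSign d i * v i := by
  rw [betaB_comm, betaB_evec_left]

lemma betaB_evec_zero_evec_zero : betaB d (evec d 0) (evec d 0) = 1 := by
  simp [betaB_evec_left, betaSign, evec]

lemma eq_of_forall_betaB_eq {y z : Vd d} (h : ∀ x, betaB d x y = betaB d x z) : y = z := by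
  funext j
  have := h (evec d j)
  rw [betaB_evec_left, betaB_evec_left] at this
  exact mul_left_cancel₀ (by unfold betaSign; split_ifs <;> norm_num) this

end Form

section Group

variable {d : ℕ}

def betaAdjoint (g : Mat d) : Mat d := Jmat d * gᵀ * Jmat d

lemma Jmat_mul_self : Jmat d * Jmat d = 1 := by
  rw [Jmat, diagonal_mul_diagonal, ← diagonal_one]
  congr 1
  funext j
  by_cases hj : (j : ℕ) ≤ 1 <;> simp [betaSign, hj]

lemma betaB_mulVec_left (g : Mat d) (x y : Vd d) :
    betaB d (g *ᵥ x) y = betaB d x (betaAdjoint g *ᵥ y) := by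
  simp only [betaB_eq_dotProduct, betaAdjoint, mulVec_mulVec, ← mul_assoc, Jmat_mul_self, one_mul]
  rw [← mulVec_mulVec, dotProduct_mulVec x, vecMul_transpose]

lemma betaAdjoint_mul_self {g : Mat d} (hg : ∀ x y, betaB d (g *ᵥ x) (g *ᵥ y) = betaB d x y) :
    betaAdjoint g * g = 1 := by
  refine ext_iff_mulVec.2 fun y => eq_of_forall_betaB_eq fun x => ?_
  rw [← mulVec_mulVec, ← betaB_mulVec_left, hg, one_mulVec]

lemma mem_Obeta_iff {g : Mat d} :
    g ∈ Obeta d ↔ ∀ x y, betaB d (g *ᵥ x) (g *ᵥ y) = betaB d x y :=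
  ⟨And.right, fun hg => ⟨IsUnit.of_mul_eq_one_right _ (betaAdjoint_mul_self hg), hg⟩⟩

lemma one_mem_Obeta : (1 : Mat d) ∈ Obeta d :=
  mem_Obeta_iff.2 fun x y => by simp only [one_mulVec]

lemma mul_mem_Obeta {g h : Mat d} (hg : g ∈ Obeta d) (hh : h ∈ Obeta d) : g * h ∈ Obeta d :=
  mem_Obeta_iff.2 fun x y => by rw [← mulVec_mulVec, ← mulVec_mulVec, hg.2, hh.2]

lemma betaAdjoint_mem_Obeta {g : Mat d} (hg : g ∈ Obeta d) : betaAdjoint g ∈ Obeta d := by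
  have hinv : g * betaAdjoint g = 1 := mul_eq_one_comm.1 (betaAdjoint_mul_self hg.2)
  refine mem_Obeta_iff.2 fun x y => ?_
  rw [← hg.2, mulVec_mulVec, mulVec_mulVec, hinv, one_mulVec, one_mulVec]

lemma one_mem_Gset : (1 : Mat d) ∈ Gset d := mem_connectedComponentIn one_mem_Obeta

lemma Gset_subset_Obeta : Gset d ⊆ Obeta d := connectedComponentIn_subset _ _

lemma betaB_mulVec_of_mem_Gset {g : Mat d} (hg : g ∈ Gset d) (x y : Vd d) :
    betaB d (g *ᵥ x) (g *ᵥ y) = betaB d x y :=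
  (Gset_subset_Obeta hg).2 x y

lemma mapsTo_Gset {f : Mat d → Mat d} (hf : Continuous f)
    (hO : Set.MapsTo f (Obeta d) (Obeta d)) (h1 : f 1 ∈ Gset d) :
    Set.MapsTo f (Gset d) (Gset d) := by
  intro g hg
  have := connectedComponentIn_mono _ hO.image_subset
    (hf.continuousOn.mapsTo_connectedComponentIn one_mem_Obeta hg)
  rwa [← connectedComponentIn_eq h1] at this

lemma mul_mem_Gset {g h : Mat d} (hg : g ∈ Gset d) (hh : h ∈ Gset d) : g * h ∈ Gset d :=
  mapsTo_Gset (f := (g * ·)) (by fun_prop)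
    (fun _ hm => mul_mem_Obeta (Gset_subset_Obeta hg) hm) (by rwa [mul_one]) hh

lemma betaAdjoint_mem_Gset {g : Mat d} (hg : g ∈ Gset d) : betaAdjoint g ∈ Gset d :=
  mapsTo_Gset (f := betaAdjoint) (by unfold betaAdjoint; fun_prop)
    (fun _ hm => betaAdjoint_mem_Obeta hm)
    (by rw [betaAdjoint, transpose_one, mul_one, Jmat_mul_self]; exact one_mem_Gset) hg

lemma betaAdjoint_mul_of_mem_Gset {g : Mat d} (hg : g ∈ Gset d) : betaAdjoint g * g = 1 :=
  betaAdjoint_mul_self (Gset_subset_Obeta hg).2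

end Group

section PlaneRotation

variable {d : ℕ} {a b : Vd d} {e : ℝ}

/-- For `β(a,a) = 1`, `β(a,b) = 0`, `β(b,b) = e = ±1` and `c² + e s² = 1`, this is the isometry
`a ↦ c a + s b`, `b ↦ -e s a + c b` of `span(a, b)`, extended by the identity on its
`β`-orthogonal complement: a rotation for `e = 1`, a boost for `e = -1`. -/
def planeRotation (a b : Vd d) (e c s : ℝ) : Mat d :=
  1 + vecMulVec ((c - 1) • a + s • b) (a ᵥ* Jmat d)
    + vecMulVec ((e * (c - 1)) • b - s • a) (b ᵥ* Jmat d)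

lemma planeRotation_mulVec (a b : Vd d) (e c s : ℝ) (x : Vd d) :
    planeRotation a b e c s *ᵥ x = x + ((c - 1) * betaB d a x - s * betaB d b x) • a
      + (s * betaB d a x + e * (c - 1) * betaB d b x) • b := by
  simp only [planeRotation, add_mulVec, one_mulVec, vecMulVec_mulVec, ← dotProduct_mulVec,
    ← betaB_eq_dotProduct, op_smul_eq_smul]
  module

lemma planeRotation_mulVec_left (ha : betaB d a a = 1) (hab : betaB d a b = 0) (e c s : ℝ) :
    planeRotation a b e c s *ᵥ a = c • a + s • b := by
  rw [planeRotation_mulVec, ha, betaB_comm, hab]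
  module

lemma planeRotation_mulVec_of_betaB_eq_zero {x : Vd d} (hax : betaB d a x = 0)
    (hbx : betaB d b x = 0) (e c s : ℝ) : planeRotation a b e c s *ᵥ x = x := by
  rw [planeRotation_mulVec, hax, hbx]
  simp

lemma planeRotation_one_zero (a b : Vd d) (e : ℝ) : planeRotation a b e 1 0 = 1 := by
  simp [planeRotation]

lemma planeRotation_mem_Obeta (ha : betaB d a a = 1) (hb : betaB d b b = e)
    (hab : betaB d a b = 0) (he : e = 1 ∨ e = -1) {c s : ℝ} (hcs : c ^ 2 + e * s ^ 2 = 1) :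
    planeRotation a b e c s ∈ Obeta d := by
  refine mem_Obeta_iff.2 fun x y => ?_
  have hba : betaB d b a = 0 := by rw [betaB_comm, hab]
  simp only [planeRotation_mulVec, betaB_add_left, betaB_add_right, betaB_smul_left,
    betaB_smul_right, ha, hb, hab, hba, betaB_comm x a, betaB_comm x b]
  rcases he with rfl | rfl
  · linear_combination (betaB d a x * betaB d a y + betaB d b x * betaB d b y) * hcs
  · linear_combination (betaB d a x * betaB d a y - betaB d b x * betaB d b y) * hcs

lemma planeRotation_mem_Gset_of_path (ha : betaB d a a = 1) (hb : betaB d b b = e)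
    (hab : betaB d a b = 0) (he : e = 1 ∨ e = -1) {c s : ℝ → ℝ} (hc : Continuous c)
    (hs : Continuous s) (hc0 : c 0 = 1) (hs0 : s 0 = 0) (hcs : ∀ t, c t ^ 2 + e * s t ^ 2 = 1)
    (t : ℝ) : planeRotation a b e (c t) (s t) ∈ Gset d := by
  have hpath : IsPreconnected (Set.range fun t => planeRotation a b e (c t) (s t)) :=
    isPreconnected_range (by unfold planeRotation; fun_prop)
  refine hpath.subset_connectedComponentIn ⟨0, by simp only [hc0, hs0, planeRotation_one_zero]⟩
    ?_ ⟨t, rfl⟩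
  rintro _ ⟨t, rfl⟩
  exact planeRotation_mem_Obeta ha hb hab he (hcs t)

lemma planeRotation_cos_sin_mem_Gset (ha : betaB d a a = 1) (hb : betaB d b b = 1)
    (hab : betaB d a b = 0) (θ : ℝ) :
    planeRotation a b 1 (Real.cos θ) (Real.sin θ) ∈ Gset d :=
  planeRotation_mem_Gset_of_path ha hb hab (Or.inl rfl) Real.continuous_cos Real.continuous_sin
    Real.cos_zero Real.sin_zero (fun t => by rw [one_mul, Real.cos_sq_add_sin_sq]) θ

lemma planeRotation_mem_Gset_of_hyperbola (ha : betaB d a a = 1) (hb : betaB d b b = -1)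
    (hab : betaB d a b = 0) {c s : ℝ} (hc : 0 < c) (hcs : c ^ 2 - s ^ 2 = 1) :
    planeRotation a b (-1) c s ∈ Gset d := by
  have hcosh : Real.cosh (Real.arsinh s) = c := by
    rw [Real.cosh_arsinh, ← Real.sqrt_sq hc.le]
    congr 1
    linarith
  have := planeRotation_mem_Gset_of_path ha hb hab (Or.inr rfl) Real.continuous_cosh
    Real.continuous_sinh Real.cosh_zero Real.sinh_zero
    (fun t => by linear_combination Real.cosh_sq_sub_sinh_sq t) (Real.arsinh s)
  rwa [hcosh, Real.sinh_arsinh] at this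

lemma planeRotation_mul_comm {T : Mat d} (hT : ∀ x y, betaB d (T *ᵥ x) y = betaB d x (T *ᵥ y))
    {εa εb : ℝ} (hTa : T *ᵥ a = εa • a) (hTb : T *ᵥ b = εb • b) {c s : ℝ}
    (hs : s = 0 ∨ εa = εb) : planeRotation a b e c s * T = T * planeRotation a b e c s := by
  refine ext_iff_mulVec.2 fun x => ?_
  have hax : betaB d a (T *ᵥ x) = εa * betaB d a x := by rw [← hT, hTa, betaB_smul_left]
  have hbx : betaB d b (T *ᵥ x) = εb * betaB d b x := by rw [← hT, hTb, betaB_smul_left]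
  rw [← mulVec_mulVec, ← mulVec_mulVec, planeRotation_mulVec, planeRotation_mulVec, hax, hbx,
    mulVec_add, mulVec_add, mulVec_smul, mulVec_smul, hTa, hTb]
  rcases hs with rfl | rfl
  · module
  · module

lemma exists_boost {w : Vd d} (ha : betaB d a a = 1) (haw : betaB d a w = 0)
    (hw : betaB d w w < 0) {c : ℝ} (hc : 0 < c) (hcw : c ^ 2 + betaB d w w = 1) {T : Mat d}
    (hT : ∀ x y, betaB d (T *ᵥ x) y = betaB d x (T *ᵥ y)) {ε : ℝ} (hTa : T *ᵥ a = ε • a)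
    (hTw : T *ᵥ w = ε • w) :
    ∃ g ∈ Gset d, g * T = T * g ∧ g *ᵥ a = c • a + w ∧
      ∀ x, betaB d a x = 0 → betaB d w x = 0 → g *ᵥ x = x := by
  set σ := Real.sqrt (-betaB d w w)
  have hσ : 0 < σ := Real.sqrt_pos.2 (neg_pos.2 hw)
  have hσ2 : σ ^ 2 = -betaB d w w := Real.sq_sqrt (by linarith)
  set b := σ⁻¹ • w
  have hσb : σ • b = w := smul_inv_smul₀ hσ.ne' w
  have hbb : betaB d b b = -1 := by
    simp only [b, betaB_smul_left, betaB_smul_right]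
    field_simp
    linarith
  have hab : betaB d a b = 0 := by simp only [b, betaB_smul_right, haw, mul_zero]
  refine ⟨planeRotation a b (-1) c σ,
    planeRotation_mem_Gset_of_hyperbola ha hbb hab hc (by linarith),
    planeRotation_mul_comm hT hTa (by rw [mulVec_smul, hTw, smul_comm]) (Or.inr rfl),
    by rw [planeRotation_mulVec_left ha hab, hσb], fun x hax hwx => ?_⟩
  exact planeRotation_mulVec_of_betaB_eq_zero hax
    (by simp only [b, betaB_smul_left, hwx, mul_zero]) _ _ _

end PlaneRotation

section Tauh

variable {d : ℕ}

lemma tauh_mulVec_apply (x : Vd d) (j : Fin (d + 1)) :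
    (tauh d *ᵥ x) j = (if (j : ℕ) = 1 ∨ (j : ℕ) = 2 then -1 else 1) * x j := by
  rw [tauh, mulVec_diagonal]

lemma betaB_tauh_mulVec_left (x y : Vd d) :
    betaB d (tauh d *ᵥ x) y = betaB d x (tauh d *ᵥ y) := by
  simp only [betaB, tauh_mulVec_apply]
  exact Finset.sum_congr rfl fun j _ => by ring

lemma betaB_eq_zero_of_tauh {x y : Vd d} (hx : tauh d *ᵥ x = x) (hy : tauh d *ᵥ y = -y) :
    betaB d x y = 0 := by
  have := betaB_tauh_mulVec_left x y
  rw [hx, hy, betaB_neg_right] at this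
  linarith

lemma tauh_mulVec_evec_zero : tauh d *ᵥ evec d 0 = evec d 0 := by
  ext j
  by_cases hj : j = 0 <;> simp [tauh_mulVec_apply, evec, hj]

end Tauh

section Coordinates

variable {n : ℕ}

@[simp] lemma two_mod_add_three (n : ℕ) : 2 % (n + 2 + 1) = 2 := Nat.mod_eq_of_lt (by omega)

lemma betaB_evec_zero_evec_one : betaB (n + 2) (evec (n + 2) 0) (evec (n + 2) 1) = 0 := by
  simp [betaB_evec_left, evec]

lemma betaB_evec_one_evec_one : betaB (n + 2) (evec (n + 2) 1) (evec (n + 2) 1) = 1 := by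
  simp [betaB_evec_left, betaSign, evec]

lemma betaB_evec_one_evec_two : betaB (n + 2) (evec (n + 2) 1) (evec (n + 2) 2) = 0 := by
  simp [betaB_evec_left, evec, Fin.ext_iff]

lemma betaB_evec_two_evec_two : betaB (n + 2) (evec (n + 2) 2) (evec (n + 2) 2) = -1 := by
  simp [betaB_evec_left, betaSign, evec]

lemma tauh_mulVec_evec_one : tauh (n + 2) *ᵥ evec (n + 2) 1 = -evec (n + 2) 1 := by
  ext j
  by_cases hj : j = 1 <;> simp [tauh_mulVec_apply, evec, hj]

lemma tauh_mulVec_evec_two : tauh (n + 2) *ᵥ evec (n + 2) 2 = -evec (n + 2) 2 := by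
  ext j
  by_cases hj : j = 2 <;> simp [tauh_mulVec_apply, evec, hj]

lemma apply_one_eq_zero_of_tauh {x : Vd (n + 2)} (hx : tauh (n + 2) *ᵥ x = x) : x 1 = 0 := by
  have := congrFun hx 1
  simp [tauh_mulVec_apply] at this
  linarith

lemma eq_smul_evec_one_add_of_tauh {y : Vd (n + 2)} (hy : tauh (n + 2) *ᵥ y = -y) :
    y = y 1 • evec (n + 2) 1 + y 2 • evec (n + 2) 2 := by
  ext j
  have := congrFun hy j
  by_cases hj : (j : ℕ) = 1 ∨ (j : ℕ) = 2
  · rcases hj with h | h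
    · obtain rfl : j = 1 := Fin.ext (by simp [h])
      simp [evec, Fin.ext_iff]
    · obtain rfl : j = 2 := Fin.ext (by simp [h])
      simp [evec, Fin.ext_iff]
  · simp only [tauh_mulVec_apply, if_neg hj, one_mul, Pi.neg_apply] at this
    simp only [not_or] at hj
    simp [evec, Fin.ext_iff, hj]
    linarith

lemma betaB_self_eq_neg_dotProduct {z : Vd (n + 2)} (h0 : z 0 = 0) (h1 : z 1 = 0) :
    betaB (n + 2) z z = -(z ⬝ᵥ z) := by
  simp only [betaB, dotProduct, ← Finset.sum_neg_distrib]
  refine Finset.sum_congr rfl fun j _ => ?_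
  by_cases hj : (j : ℕ) ≤ 1
  · rcases (by omega : (j : ℕ) = 0 ∨ (j : ℕ) = 1) with hj | hj
    · obtain rfl : j = 0 := Fin.ext (by simp [hj])
      simp [h0]
    · obtain rfl : j = 1 := Fin.ext (by simp [hj])
      simp [h1]
  · simp [hj]

lemma betaB_self_nonpos {z : Vd (n + 2)} (h0 : z 0 = 0) (h1 : z 1 = 0) :
    betaB (n + 2) z z ≤ 0 := by
  rw [betaB_self_eq_neg_dotProduct h0 h1, neg_nonpos]
  exact dotProduct_self_star_nonneg z

lemma betaB_self_neg {z : Vd (n + 2)} (h0 : z 0 = 0) (h1 : z 1 = 0) (hz : z ≠ 0) :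
    betaB (n + 2) z z < 0 := by
  rw [betaB_self_eq_neg_dotProduct h0 h1, neg_neg_iff_pos]
  exact dotProduct_self_star_pos_iff.2 hz

end Coordinates

section PlaneDet

variable {n : ℕ}

def planeDet (x y : Vd (n + 2)) : ℝ := x 0 * y 1 - x 1 * y 0

lemma planeDet_smul_smul (a b : ℝ) (x y : Vd (n + 2)) :
    planeDet (a • x) (b • y) = a * b * planeDet x y := by
  simp only [planeDet, Pi.smul_apply, smul_eq_mul]
  ring

/-- The coordinates `0, 1` are injective on the positive plane `span(u, v)`, since `β` is
negative definite on their common kernel. -/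
lemma planeDet_ne_zero {u v : Vd (n + 2)} (hu : 0 < betaB (n + 2) u u)
    (hv : 0 < betaB (n + 2) v v) (huv : betaB (n + 2) u v = 0) : planeDet u v ≠ 0 := by
  have key : ∀ a b : ℝ, (a • u + b • v) 0 = 0 → (a • u + b • v) 1 = 0 → a = 0 ∧ b = 0 := by
    intro a b h0 h1
    have hle := betaB_self_nonpos h0 h1
    simp only [betaB_add_left, betaB_add_right, betaB_smul_left, betaB_smul_right, huv,
      betaB_comm v u] at hle
    have ha : a ^ 2 * betaB (n + 2) u u = 0 := by
      nlinarith [mul_nonneg (sq_nonneg a) hu.le, mul_nonneg (sq_nonneg b) hv.le]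
    have hb : b ^ 2 * betaB (n + 2) v v = 0 := by
      nlinarith [mul_nonneg (sq_nonneg a) hu.le, mul_nonneg (sq_nonneg b) hv.le]
    exact ⟨by simpa [hu.ne'] using ha, by simpa [hv.ne'] using hb⟩
  intro hdet
  unfold planeDet at hdet
  obtain ⟨-, hu1⟩ := key (v 1) (-u 1) (by simp; linarith) (by simp; ring)
  obtain ⟨-, hu0⟩ := key (v 0) (-u 0) (by simp; ring) (by simp; linarith)
  have := betaB_self_nonpos (neg_eq_zero.1 hu0) (neg_eq_zero.1 hu1)
  linarith

lemma planeDet_pos_of_mulVec {x y : Vd (n + 2)} (hx : 0 < betaB (n + 2) x x)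
    (hy : 0 < betaB (n + 2) y y) (hxy : betaB (n + 2) x y = 0) {k : Mat (n + 2)}
    (hk : k ∈ Gset (n + 2)) (hpos : 0 < planeDet (k *ᵥ x) (k *ᵥ y)) : 0 < planeDet x y := by
  set f : Mat (n + 2) → ℝ := fun m => planeDet (m *ᵥ x) (m *ᵥ y)
  have hf : Continuous f := by unfold f planeDet; fun_prop
  have hne : ∀ m ∈ Gset (n + 2), f m ≠ 0 := fun m hm => by
    apply planeDet_ne_zero <;> rwa [betaB_mulVec_of_mem_Gset hm]
  have h1 : f 1 = planeDet x y := by simp only [f, one_mulVec]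
  by_contra hle
  have hneg : f 1 < 0 := lt_of_le_of_ne (by rw [h1]; linarith) (hne 1 one_mem_Gset)
  obtain ⟨m, hm, hfm⟩ := isPreconnected_connectedComponentIn.intermediate_value
    one_mem_Gset hk hf.continuousOn ⟨hneg.le, hpos.le⟩
  exact hne m hm hfm

lemma posPair.planeDet_pos {x y : Vd (n + 2)} (h : posPair (n + 2) x y) :
    0 < planeDet x y := by
  obtain ⟨k, hk, hkx, hky0, hkyy, hky1⟩ := h
  rw [betaB_evec_left] at hky0
  rw [betaB_evec_right] at hky1
  rw [betaB_mulVec_of_mem_Gset hk] at hkyy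
  refine planeDet_pos_of_mulVec ?_ hkyy ?_ hk ?_
  · rw [← betaB_mulVec_of_mem_Gset hk, hkx, betaB_evec_zero_evec_zero]
    exact one_pos
  · rw [← betaB_mulVec_of_mem_Gset hk, hkx, betaB_evec_left]
    simpa [betaSign] using hky0
  · simp only [planeDet, hkx]
    simpa [betaSign, evec] using hky1

end PlaneDet

section Construction

variable {n : ℕ}

local notation "τ" => tauh (n + 2)

lemma exists_boost_of_tauh_even {u : Vd (n + 2)} (hu : τ *ᵥ u = u)
    (huu : betaB (n + 2) u u = 1) (hu0 : 0 < u 0) :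
    ∃ g ∈ Gset (n + 2), g * τ = τ * g ∧ g *ᵥ evec (n + 2) 0 = u ∧
      ∀ y, τ *ᵥ y = -y → g *ᵥ y = y := by
  set w := u - u 0 • evec (n + 2) 0 with hw_def
  have hu_eq : u = u 0 • evec (n + 2) 0 + w := by rw [hw_def, add_sub_cancel]
  have hw : τ *ᵥ w = w := by rw [mulVec_sub, mulVec_smul, hu, tauh_mulVec_evec_zero]
  have hw0 : w 0 = 0 := by simp [w, evec]
  have hw1 : w 1 = 0 := by simp [w, evec, apply_one_eq_zero_of_tauh hu]
  have hww : u 0 ^ 2 + betaB (n + 2) w w = 1 := by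
    simp [w, betaB_evec_left, betaB_evec_right, betaSign, evec, huu]
    ring
  by_cases hw_zero : w = 0
  · refine ⟨1, one_mem_Gset, by rw [one_mul, mul_one], ?_, fun y _ => one_mulVec y⟩
    have hu0_eq : u 0 = 1 := by
      rw [hw_zero] at hww
      nlinarith [show betaB (n + 2) 0 0 = 0 by simp [betaB]]
    rw [one_mulVec, hu_eq, hw_zero, hu0_eq, one_smul, add_zero]
  · have h0w : betaB (n + 2) (evec (n + 2) 0) w = 0 := by simp [betaB_evec_left, hw0]
    obtain ⟨g, hg, hgτ, hgu, hgfix⟩ := exists_boost betaB_evec_zero_evec_zero h0w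
      (betaB_self_neg hw0 hw1 hw_zero) hu0 hww betaB_tauh_mulVec_left
      (by rw [one_smul, tauh_mulVec_evec_zero]) (by rw [one_smul, hw])
    refine ⟨g, hg, hgτ, by rw [hgu, ← hu_eq], fun y hy => hgfix y ?_ ?_⟩
    · exact betaB_eq_zero_of_tauh tauh_mulVec_evec_zero hy
    · exact betaB_eq_zero_of_tauh hw hy

lemma exists_boost_of_tauh_odd {v : Vd (n + 2)} (hv : τ *ᵥ v = -v)
    (hvv : betaB (n + 2) v v = 1) (hv1 : 0 < v 1) :
    ∃ g ∈ Gset (n + 2), g * τ = τ * g ∧ g *ᵥ evec (n + 2) 0 = evec (n + 2) 0 ∧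
      g *ᵥ evec (n + 2) 1 = v := by
  have hv_eq := eq_smul_evec_one_add_of_tauh hv
  have hcs : v 1 ^ 2 - v 2 ^ 2 = 1 := by
    rw [hv_eq] at hvv
    simp only [betaB_add_left, betaB_add_right, betaB_smul_left, betaB_smul_right,
      betaB_evec_one_evec_one, betaB_evec_two_evec_two, betaB_evec_one_evec_two,
      betaB_comm _ (evec (n + 2) 1)] at hvv
    linarith
  refine ⟨planeRotation (evec (n + 2) 1) (evec (n + 2) 2) (-1) (v 1) (v 2),
    planeRotation_mem_Gset_of_hyperbola betaB_evec_one_evec_one betaB_evec_two_evec_two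
      betaB_evec_one_evec_two hv1 hcs,
    planeRotation_mul_comm betaB_tauh_mulVec_left (by rw [neg_one_smul, tauh_mulVec_evec_one])
      (by rw [neg_one_smul, tauh_mulVec_evec_two]) (Or.inr rfl),
    planeRotation_mulVec_of_betaB_eq_zero ?_ ?_ _ _ _,
    by rw [planeRotation_mulVec_left betaB_evec_one_evec_one betaB_evec_one_evec_two, ← hv_eq]⟩
  · rw [betaB_comm, betaB_evec_zero_evec_one]
  · simp [betaB_evec_left, evec, Fin.ext_iff]

lemma exists_rotation_pi :
    ∃ g ∈ Gset (n + 2), g * τ = τ * g ∧ g *ᵥ evec (n + 2) 0 = -evec (n + 2) 0 ∧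
      g *ᵥ evec (n + 2) 1 = -evec (n + 2) 1 := by
  refine ⟨planeRotation (evec (n + 2) 0) (evec (n + 2) 1) 1 (Real.cos Real.pi)
    (Real.sin Real.pi), planeRotation_cos_sin_mem_Gset betaB_evec_zero_evec_zero
      betaB_evec_one_evec_one betaB_evec_zero_evec_one _,
    planeRotation_mul_comm betaB_tauh_mulVec_left (by rw [one_smul, tauh_mulVec_evec_zero])
      (by rw [neg_one_smul, tauh_mulVec_evec_one]) (Or.inl Real.sin_pi), ?_, ?_⟩
  · rw [planeRotation_mulVec_left betaB_evec_zero_evec_zero betaB_evec_zero_evec_one, Real.cos_pi,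
      Real.sin_pi]
    module
  · rw [planeRotation_mulVec, betaB_evec_zero_evec_one, betaB_evec_one_evec_one, Real.cos_pi,
      Real.sin_pi]
    module

lemma exists_mem_Gset_of_pos {u v : Vd (n + 2)} (hu : τ *ᵥ u = u) (hv : τ *ᵥ v = -v)
    (huu : betaB (n + 2) u u = 1) (hvv : betaB (n + 2) v v = 1) (hu0 : 0 < u 0) (hv1 : 0 < v 1) :
    ∃ g ∈ Gset (n + 2), g * τ = τ * g ∧ g *ᵥ evec (n + 2) 0 = u ∧ g *ᵥ evec (n + 2) 1 = v := by
  obtain ⟨g₁, hg₁, hg₁τ, hg₁u, hg₁odd⟩ := exists_boost_of_tauh_even hu huu hu0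
  obtain ⟨g₂, hg₂, hg₂τ, hg₂e, hg₂v⟩ := exists_boost_of_tauh_odd hv hvv hv1
  refine ⟨g₁ * g₂, mul_mem_Gset hg₁ hg₂, ?_, ?_, ?_⟩
  · rw [mul_assoc, hg₂τ, ← mul_assoc, hg₁τ, mul_assoc]
  · rw [← mulVec_mulVec, hg₂e, hg₁u]
  · rw [← mulVec_mulVec, hg₂v, hg₁odd v hv]

lemma exists_mem_Gset_of_mul_pos {u v : Vd (n + 2)} (hu : τ *ᵥ u = u) (hv : τ *ᵥ v = -v)
    (huu : betaB (n + 2) u u = 1) (hvv : betaB (n + 2) v v = 1) (h : 0 < u 0 * v 1) :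
    ∃ g ∈ Gset (n + 2), g * τ = τ * g ∧ g *ᵥ evec (n + 2) 0 = u ∧ g *ᵥ evec (n + 2) 1 = v := by
  rcases pos_and_pos_or_neg_and_neg_of_mul_pos h with ⟨hu0, hv1⟩ | ⟨hu0, hv1⟩
  · exact exists_mem_Gset_of_pos hu hv huu hvv hu0 hv1
  · obtain ⟨g, hg, hgτ, hgu, hgv⟩ := exists_mem_Gset_of_pos (u := -u) (v := -v)
      (by rw [mulVec_neg, hu]) (by rw [mulVec_neg, hv]) (by simpa using huu)
      (by simpa using hvv) (by simpa using hu0) (by simpa using hv1)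
    obtain ⟨r, hr, hrτ, hr0, hr1⟩ := exists_rotation_pi (n := n)
    refine ⟨g * r, mul_mem_Gset hg hr, ?_, ?_, ?_⟩
    · rw [mul_assoc, hrτ, ← mul_assoc, hgτ, mul_assoc]
    · rw [← mulVec_mulVec, hr0, mulVec_neg, hgu, neg_neg]
    · rw [← mulVec_mulVec, hr1, mulVec_neg, hgv, neg_neg]

lemma exists_of_mem_TubePlus {x y : Vd (n + 2)} (hp : (x, y) ∈ TubePlus (n + 2))
    (hx : τ *ᵥ x = x) (hy : τ *ᵥ y = -y) :
    ∃ g ∈ Gset (n + 2), g * τ = τ * g ∧ ∃ t : ℝ, 0 < t ∧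
      (x, y) = (Real.cosh t • g *ᵥ evec (n + 2) 0, Real.sinh t • g *ᵥ evec (n + 2) 1) := by
  obtain ⟨⟨hdiff, -, hyy⟩, hpos⟩ := hp
  dsimp only at hdiff hyy hpos
  set t := Real.arsinh (Real.sqrt (betaB (n + 2) y y))
  have hs_pos : 0 < Real.sinh t := by rw [Real.sinh_arsinh]; exact Real.sqrt_pos.2 hyy
  have hc_pos := Real.cosh_pos t
  have hs2 : Real.sinh t ^ 2 = betaB (n + 2) y y := by
    rw [Real.sinh_arsinh, Real.sq_sqrt hyy.le]
  have hc2 : Real.cosh t ^ 2 = betaB (n + 2) x x := by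
    rw [Real.cosh_sq', hs2]
    linarith
  have hdet : 0 < planeDet x y := by
    have := hpos.planeDet_pos
    rw [← hc2, Real.sqrt_sq hc_pos.le, planeDet_smul_smul] at this
    exact pos_of_mul_pos_right this (by positivity)
  set u := (Real.cosh t)⁻¹ • x
  set v := (Real.sinh t)⁻¹ • y
  have hu : τ *ᵥ u = u := by rw [mulVec_smul, hx]
  have hv : τ *ᵥ v = -v := by rw [mulVec_smul, hy, smul_neg]
  have huu : betaB (n + 2) u u = 1 := by
    simp only [u, betaB_smul_left, betaB_smul_right, ← hc2]
    field_simp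
  have hvv : betaB (n + 2) v v = 1 := by
    simp only [v, betaB_smul_left, betaB_smul_right, ← hs2]
    field_simp
  have huv : 0 < u 0 * v 1 := by
    have : planeDet u v = u 0 * v 1 := by simp [planeDet, apply_one_eq_zero_of_tauh hu]
    rw [← this, planeDet_smul_smul]
    exact mul_pos (by positivity) hdet
  obtain ⟨g, hg, hgτ, hgu, hgv⟩ := exists_mem_Gset_of_mul_pos hu hv huu hvv huv
  refine ⟨g, hg, hgτ, t, Real.arsinh_pos_iff.2 (Real.sqrt_pos.2 hyy), ?_⟩
  rw [hgu, hgv, smul_inv_smul₀ hc_pos.ne', smul_inv_smul₀ hs_pos.ne']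

lemma mem_TubePlus_of_mem_Gset {g : Mat (n + 2)} (hg : g ∈ Gset (n + 2)) {t : ℝ} (ht : 0 < t) :
    (Real.cosh t • g *ᵥ evec (n + 2) 0, Real.sinh t • g *ᵥ evec (n + 2) 1) ∈
      TubePlus (n + 2) := by
  have hs_pos := Real.sinh_pos_iff.2 ht
  have hc_pos := Real.cosh_pos t
  refine ⟨⟨?_, ?_, ?_⟩, ?_⟩ <;>
    simp only [betaB_smul_left, betaB_smul_right, betaB_mulVec_of_mem_Gset hg,
      betaB_evec_zero_evec_zero, betaB_evec_zero_evec_one, betaB_evec_one_evec_one]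
  · linear_combination Real.cosh_sq_sub_sinh_sq t
  · ring
  · positivity
  · rw [mul_one, ← sq, Real.sqrt_sq hc_pos.le]
    refine ⟨betaAdjoint g, betaAdjoint_mem_Gset hg, ?_, ?_⟩
    · rw [inv_smul_smul₀ hc_pos.ne', mulVec_mulVec, betaAdjoint_mul_of_mem_Gset hg, one_mulVec]
    · rw [smul_smul, mulVec_smul, mulVec_mulVec, betaAdjoint_mul_of_mem_Gset hg, one_mulVec]
      refine ⟨?_, ?_, ?_⟩ <;>
        simp only [betaB_smul_left, betaB_smul_right, betaB_evec_zero_evec_one,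
          betaB_evec_one_evec_one]
      · ring
      · positivity
      · positivity

lemma tauh_mulVec_smul_mulVec_evec {g : Mat (n + 2)} (hg : g * τ = τ * g) (a b : ℝ) :
    τ *ᵥ (a • g *ᵥ evec (n + 2) 0) = a • g *ᵥ evec (n + 2) 0 ∧
      τ *ᵥ (b • g *ᵥ evec (n + 2) 1) = -(b • g *ᵥ evec (n + 2) 1) := by
  constructor
  · rw [mulVec_smul, mulVec_mulVec, ← hg, ← mulVec_mulVec, tauh_mulVec_evec_zero]
  · rw [mulVec_smul, mulVec_mulVec, ← hg, ← mulVec_mulVec, tauh_mulVec_evec_one, mulVec_neg,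
      smul_neg]

end Construction

/-- The fixed point set of the antiholomorphic extension `τ̄_h` (i.e. `τ_h x = x`,
`τ_h y = −y` for `z = x + iy`) in the positive tube domain equals
`G^{τ_h}·Exp_{e₀}(i ℝ₊ e₁)`. -/
theorem stmt10 (d : ℕ) (hd : 2 ≤ d) :
    {p ∈ TubePlus d | (tauh d).mulVec p.1 = p.1 ∧ (tauh d).mulVec p.2 = -p.2} =
    {p : Vd d × Vd d | ∃ g ∈ Gset d, g * tauh d = tauh d * g ∧ ∃ t : ℝ, 0 < t ∧
      p = (Real.cosh t • g.mulVec (evec d 0), Real.sinh t • g.mulVec (evec d 1))} := by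
  obtain ⟨n, rfl⟩ := Nat.exists_eq_add_of_le' hd
  ext ⟨x, y⟩
  constructor
  · rintro ⟨hp, hx, hy⟩
    exact exists_of_mem_TubePlus hp hx hy
  · rintro ⟨g, hg, hgτ, t, ht, hxy⟩
    obtain ⟨rfl, rfl⟩ := Prod.mk.inj hxy
    exact ⟨mem_TubePlus_of_mem_Gset hg ht, tauh_mulVec_smul_mulVec_evec hgτ _ _⟩
end
end

section
/- The KMS wedge domain and the positivity domain on anti-de Sitter space coincide: W_M^{KMS}(h) = W_M⁺(h). -/
noncomputable section

/-!
A pair `(x, y)` with `β(x,x) = 1`, `β(x,y) = 0`, `β(y,y) > 0` spans a positive definite plane,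
which meets the negative definite span of `e₂, …, e_d` only in `0`. So its projection to
`⟨e₀, e₁⟩` is injective: `det01 x y = x₀y₁ - x₁y₀ ≠ 0`. As `G` is connected it preserves the
sign of `det01`, and as `G` acts transitively on `AdS^d` (products of two reflections already
suffice), the pair is positive iff moreover `det01 x y > 0`.

Since `α_{it}(x) = (x + (cos t - 1) h²x, sin t · hx)`, both the KMS condition and the positivity
of `(x, hx)` then reduce to `x₁² < x₂²` and `x₀x₂ > 0`.
-/

lemma IsPreconnected.pos_of_pos {X : Type*} [TopologicalSpace X] {S : Set X}
    (hS : IsPreconnected S) {f : X → ℝ} (hf : ContinuousOn f S) (hf0 : ∀ a ∈ S, f a ≠ 0)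
    {a b : X} (ha : a ∈ S) (hb : b ∈ S) (hfa : 0 < f a) : 0 < f b := by
  by_contra! hfb
  obtain ⟨c, hc, hfc⟩ := hS.intermediate_value hb ha hf ⟨hfb, hfa.le⟩
  exact hf0 c hc hfc

lemma Continuous.mem_connectedComponentIn {X : Type*} [TopologicalSpace X] {F : Set X}
    {γ : ℝ → X} (hγ : Continuous γ) (hF : ∀ s, γ s ∈ F) (s t : ℝ) :
    γ t ∈ connectedComponentIn F (γ s) :=
  (isPreconnected_range hγ).subset_connectedComponentIn (Set.mem_range_self s)
    (Set.range_subset_iff.2 hF) (Set.mem_range_self t)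

@[fun_prop] lemma Continuous.betaB {X : Type*} [TopologicalSpace X] {d : ℕ} {f g : X → Vd d}
    (hf : Continuous f) (hg : Continuous g) : Continuous fun s => betaB d (f s) (g s) := by
  unfold _root_.betaB; fun_prop

namespace AntiDeSitter

open Matrix

variable {d : ℕ}

lemma fin_zero_ne_one (hd : 1 ≤ d) : (0 : Fin (d + 1)) ≠ 1 := by
  rw [Ne, Fin.ext_iff, Fin.val_one', Fin.val_zero, Nat.mod_eq_of_lt (by omega)]
  exact zero_ne_one

lemma fin_eq_zero_or_eq_one {j : Fin (d + 1)} (hj : (j : ℕ) ≤ 1) : j = 0 ∨ j = 1 := by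
  rcases Nat.le_one_iff_eq_zero_or_eq_one.1 hj with h | h
  · exact Or.inl (Fin.ext h)
  · refine Or.inr (Fin.ext ?_)
    rw [h, Fin.val_one', Nat.mod_eq_of_lt (by omega)]

lemma val_eq_one_iff (hd : 1 ≤ d) {j : Fin (d + 1)} : (j : ℕ) = 1 ↔ j = 1 := by
  rw [Fin.ext_iff, Fin.val_one', Nat.mod_eq_of_lt (by omega)]

lemma val_two (hd : 2 ≤ d) : ((2 : Fin (d + 1)) : ℕ) = 2 :=
  Fin.val_cast_of_lt (by omega : 2 < d + 1)

lemma val_eq_two_iff (hd : 2 ≤ d) {j : Fin (d + 1)} : (j : ℕ) = 2 ↔ j = 2 := by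
  rw [Fin.ext_iff, val_two hd]

lemma fin_two_ne_zero (hd : 2 ≤ d) : (2 : Fin (d + 1)) ≠ 0 := fun h => by
  simpa [h] using val_two hd

lemma fin_two_ne_one (hd : 2 ≤ d) : (2 : Fin (d + 1)) ≠ 1 := fun h => by
  simpa [h, Fin.val_one', Nat.mod_eq_of_lt (by omega : 1 < d + 1)] using val_two hd

lemma evec_self (i : Fin (d + 1)) : evec d i i = 1 := if_pos rfl

lemma evec_zero_one (hd : 1 ≤ d) : evec d 0 1 = 0 := if_neg (fin_zero_ne_one hd).symm

lemma evec_one_two_apply (hd : 2 ≤ d) (a b : ℝ) :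
    (a • evec d 1 + b • evec d 2) 0 = 0 ∧ (a • evec d 1 + b • evec d 2) 1 = a ∧
      (a • evec d 1 + b • evec d 2) 2 = b := by
  have h21 := fin_two_ne_one hd
  simp [evec, h21, h21.symm, fin_zero_ne_one (by omega : 1 ≤ d), (fin_two_ne_zero hd).symm]

lemma betaB_comm (x y : Vd d) : betaB d x y = betaB d y x := by
  simp only [betaB, mul_right_comm]

@[simp] lemma betaB_add_left (x x' y : Vd d) :
    betaB d (x + x') y = betaB d x y + betaB d x' y := by
  simp only [betaB, Pi.add_apply, mul_add, add_mul, Finset.sum_add_distrib]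

@[simp] lemma betaB_sub_left (x x' y : Vd d) :
    betaB d (x - x') y = betaB d x y - betaB d x' y := by
  simp only [betaB, Pi.sub_apply, mul_sub, sub_mul, Finset.sum_sub_distrib]

@[simp] lemma betaB_smul_left (c : ℝ) (x y : Vd d) :
    betaB d (c • x) y = c * betaB d x y := by
  simp only [betaB, Pi.smul_apply, smul_eq_mul, Finset.mul_sum]
  exact Finset.sum_congr rfl fun _ _ => by ring

@[simp] lemma betaB_add_right (x y y' : Vd d) :
    betaB d x (y + y') = betaB d x y + betaB d x y' := by
  simp only [betaB_comm x, betaB_add_left]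

@[simp] lemma betaB_sub_right (x y y' : Vd d) :
    betaB d x (y - y') = betaB d x y - betaB d x y' := by
  simp only [betaB_comm x, betaB_sub_left]

@[simp] lemma betaB_smul_right (c : ℝ) (x y : Vd d) :
    betaB d x (c • y) = c * betaB d x y := by
  simp only [betaB_comm x, betaB_smul_left]

@[simp] lemma betaB_neg_right (x y : Vd d) : betaB d x (-y) = -betaB d x y := by
  rw [← neg_one_smul ℝ y, betaB_smul_right, neg_one_mul]

lemma betaB_evec_left (i : Fin (d + 1)) (y : Vd d) :
    betaB d (evec d i) y = (if (i : ℕ) ≤ 1 then 1 else -1) * y i := by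
  rw [betaB, Finset.sum_eq_single i (fun j _ hj => by simp [evec, hj]) (by simp)]
  simp [evec]

@[simp] lemma betaB_evec_zero_left (y : Vd d) : betaB d (evec d 0) y = y 0 := by
  simp [betaB_evec_left]

@[simp] lemma betaB_evec_one_left (y : Vd d) : betaB d (evec d 1) y = y 1 := by
  simp [betaB_evec_left, Nat.mod_le]

@[simp] lemma betaB_evec_one_right (x : Vd d) : betaB d x (evec d 1) = x 1 := by
  rw [betaB_comm, betaB_evec_one_left]

lemma betaB_evec_two_left (hd : 2 ≤ d) (y : Vd d) : betaB d (evec d 2) y = -y 2 := by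
  rw [betaB_evec_left, val_two hd, if_neg (by omega)]
  ring

lemma betaB_evec_one_two_left (hd : 2 ≤ d) (a b : ℝ) (y : Vd d) :
    betaB d (a • evec d 1 + b • evec d 2) y = a * y 1 - b * y 2 := by
  simp only [betaB_add_left, betaB_smul_left, betaB_evec_one_left, betaB_evec_two_left hd]
  ring

lemma betaB_self_nonpos {v : Vd d} (h0 : v 0 = 0) (h1 : v 1 = 0) : betaB d v v ≤ 0 := by
  refine Finset.sum_nonpos fun j _ => ?_
  split_ifs with hj
  · rcases fin_eq_zero_or_eq_one hj with rfl | rfl <;> simp [h0, h1]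
  · nlinarith [mul_self_nonneg (v j)]

def betaFlat (p : Vd d) : Vd d := fun j => (if (j : ℕ) ≤ 1 then 1 else -1) * p j

lemma betaFlat_dotProduct (p v : Vd d) : betaFlat p ⬝ᵥ v = betaB d p v := rfl

@[fun_prop] lemma continuous_betaFlat : Continuous (betaFlat : Vd d → Vd d) := by
  unfold betaFlat; fun_prop

def reflection (d : ℕ) (p : Vd d) : Mat d :=
  1 - (2 / betaB d p p) • vecMulVec p (betaFlat p)

lemma reflection_mulVec (p v : Vd d) :
    reflection d p *ᵥ v = v - (2 * betaB d p v / betaB d p p) • p := by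
  rw [reflection, sub_mulVec, one_mulVec, smul_mulVec, vecMulVec_mulVec, op_smul_eq_smul,
    smul_smul, betaFlat_dotProduct, div_mul_eq_mul_div]

lemma betaB_reflection_mulVec {p : Vd d} (hp : betaB d p p ≠ 0) (v w : Vd d) :
    betaB d (reflection d p *ᵥ v) (reflection d p *ᵥ w) = betaB d v w := by
  simp only [reflection_mulVec, betaB_sub_left, betaB_sub_right, betaB_smul_left,
    betaB_smul_right, betaB_comm p v]
  field_simp
  ring

lemma betaB_reflection_mulVec_right {p : Vd d} (hp : betaB d p p ≠ 0) (v : Vd d) :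
    betaB d p (reflection d p *ᵥ v) = -betaB d p v := by
  rw [reflection_mulVec, betaB_sub_right, betaB_smul_right]
  field_simp
  ring

lemma reflection_mul_self {p : Vd d} (hp : betaB d p p ≠ 0) :
    reflection d p * reflection d p = 1 := by
  refine ext_iff_mulVec.2 fun v => ?_
  rw [← mulVec_mulVec, reflection_mulVec _ (reflection d p *ᵥ v),
    betaB_reflection_mulVec_right hp, reflection_mulVec, one_mulVec]
  module

lemma Obeta_mul {g g' : Mat d} (hg : g ∈ Obeta d) (hg' : g' ∈ Obeta d) : g * g' ∈ Obeta d :=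
  ⟨hg.1.mul hg'.1, fun x y => by rw [← mulVec_mulVec, ← mulVec_mulVec, hg.2, hg'.2]⟩

lemma reflection_mem_Obeta {p : Vd d} (hp : betaB d p p ≠ 0) : reflection d p ∈ Obeta d :=
  ⟨IsUnit.of_mul_eq_one _ (reflection_mul_self hp), betaB_reflection_mulVec hp⟩

lemma one_mem_Gset : (1 : Mat d) ∈ Gset d :=
  mem_connectedComponentIn ⟨isUnit_one, fun x y => by simp only [one_mulVec]⟩

lemma Gset_subset_Obeta : Gset d ⊆ Obeta d := connectedComponentIn_subset _ _

lemma mul_mem_Gset {g g' : Mat d} (hg : g ∈ Gset d) (hg' : g' ∈ Gset d) : g * g' ∈ Gset d := by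
  have hpc : IsPreconnected ((fun q : Mat d × Mat d => q.1 * q.2) '' (Gset d ×ˢ Gset d)) :=
    (isPreconnected_connectedComponentIn.prod isPreconnected_connectedComponentIn).image _
      (by fun_prop)
  refine hpc.subset_connectedComponentIn ⟨(1, 1), ⟨one_mem_Gset, one_mem_Gset⟩, mul_one 1⟩ ?_
    ⟨(g, g'), ⟨hg, hg'⟩, rfl⟩
  rintro _ ⟨q, ⟨h₁, h₂⟩, rfl⟩
  exact Obeta_mul (Gset_subset_Obeta h₁) (Gset_subset_Obeta h₂)

lemma reflection_mul_reflection_mulVec {x e : Vd d} (hx : betaB d x x = 1)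
    (he : betaB d e e = 1) (hxe : betaB d x e ≠ -1) :
    (reflection d e * reflection d (e + x)) *ᵥ x = e := by
  have hcoef : 2 * betaB d (e + x) x / betaB d (e + x) (e + x) = 1 := by
    simp only [betaB_add_left, betaB_add_right, betaB_comm e x, hx, he]
    rw [div_eq_one_iff_eq (fun h => hxe (by linarith))]
    ring
  rw [← mulVec_mulVec, reflection_mulVec (e + x), hcoef, one_smul,
    show x - (e + x) = -e by abel, reflection_mulVec]
  simp only [betaB_neg_right, he]
  module

lemma reflection_mul_reflection_mem_Gset {x e : Vd d} (hx : betaB d x x = 1)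
    (he : betaB d e e = 1) (hxe : -1 < betaB d x e) :
    reflection d e * reflection d (e + x) ∈ Gset d := by
  set p : ℝ → Vd d := fun s => e + s ^ 2 • x
  -- `β(p s, p s) = (s² - 1)² + 2s²(1 + β(x, e))`, so `p s` is never null
  have hp : ∀ s, 0 < betaB d (p s) (p s) := fun s => by
    simp only [p, betaB_add_left, betaB_add_right, betaB_smul_left, betaB_smul_right,
      betaB_comm e x, hx, he]
    rcases eq_or_ne s 0 with rfl | hs
    · norm_num
    · nlinarith [sq_nonneg (s ^ 2 - 1), mul_pos (sq_pos_of_ne_zero hs) (neg_lt_iff_pos_add.1 hxe)]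
  have hγ : Continuous fun s => reflection d e * reflection d (p s) := by
    unfold reflection
    fun_prop (disch := exact fun s => (hp s).ne')
  have he' : betaB d e e ≠ 0 := by rw [he]; exact one_ne_zero
  have := hγ.mem_connectedComponentIn
    (fun s => Obeta_mul (reflection_mem_Obeta he') (reflection_mem_Obeta (hp s).ne')) 0 1
  simpa [p, reflection_mul_self he', Gset] using this

lemma exists_mem_Gset_mulVec_eq {x e : Vd d} (hx : betaB d x x = 1) (he : betaB d e e = 1)
    (hxe : -1 < betaB d x e) : ∃ g ∈ Gset d, g *ᵥ x = e :=
  ⟨_, reflection_mul_reflection_mem_Gset hx he hxe,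
    reflection_mul_reflection_mulVec hx he hxe.ne'⟩

lemma exists_mem_Gset_mulVec_eq_evec_zero (hd : 1 ≤ d) {x : Vd d} (hx : betaB d x x = 1) :
    ∃ g ∈ Gset d, g *ᵥ x = evec d 0 := by
  obtain ⟨σ, hσ, hσx⟩ : ∃ σ : ℝ, σ ^ 2 = 1 ∧ 0 ≤ σ * x 1 :=
    ⟨if 0 ≤ x 1 then 1 else -1, by split_ifs <;> norm_num, by split_ifs <;> nlinarith⟩
  have hu : betaB d (σ • evec d 1) (σ • evec d 1) = 1 := by
    simp only [betaB_smul_left, betaB_smul_right, betaB_evec_one_left, evec_self]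
    linear_combination hσ
  obtain ⟨g₁, hg₁, hxu⟩ := exists_mem_Gset_mulVec_eq hx hu
    (by rw [betaB_smul_right, betaB_evec_one_right]; linarith)
  obtain ⟨g₂, hg₂, hue⟩ := exists_mem_Gset_mulVec_eq (e := evec d 0) hu
    (by simp [evec_self]) (by simp [evec_zero_one hd])
  exact ⟨g₂ * g₁, mul_mem_Gset hg₂ hg₁, by rw [← mulVec_mulVec, hxu, hue]⟩

def det01 (x y : Vd d) : ℝ := x 0 * y 1 - x 1 * y 0

lemma det01_smul (c : ℝ) (x y : Vd d) : det01 (c • x) (c • y) = c ^ 2 * det01 x y := by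
  simp only [det01, Pi.smul_apply, smul_eq_mul]
  ring

lemma det01_evec_zero_left (hd : 1 ≤ d) (v : Vd d) : det01 (evec d 0) v = v 1 := by
  rw [det01, evec_self, evec_zero_one hd]
  ring

lemma det01_ne_zero {x y : Vd d} (hx : 0 < betaB d x x) (hy : 0 < betaB d y y)
    (hxy : betaB d x y = 0) : det01 x y ≠ 0 := by
  intro h
  -- a kernel vector `v` of the projection gives `v₀x + v₁y` with vanishing coordinates 0 and 1
  obtain ⟨v, hv, hAv⟩ := exists_mulVec_eq_zero_iff.2
    (show (!![x 0, y 0; x 1, y 1]).det = 0 by rw [det_fin_two_of, ← h, det01]; ring)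
  have hw₀ : (v 0 • x + v 1 • y) 0 = 0 := by
    simpa [mulVec, dotProduct, Fin.sum_univ_two, mul_comm] using congrFun hAv 0
  have hw₁ : (v 0 • x + v 1 • y) 1 = 0 := by
    simpa [mulVec, dotProduct, Fin.sum_univ_two, mul_comm] using congrFun hAv 1
  have hv' : v 0 ≠ 0 ∨ v 1 ≠ 0 := by
    by_contra! h0
    exact hv (by ext i; fin_cases i <;> simp [h0])
  have hpos : 0 < betaB d (v 0 • x + v 1 • y) (v 0 • x + v 1 • y) := by
    simp only [betaB_add_left, betaB_add_right, betaB_smul_left, betaB_smul_right,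
      betaB_comm y x, hxy]
    rcases hv' with h | h
    · nlinarith [mul_pos (mul_self_pos.2 h) hx, mul_nonneg (mul_self_nonneg (v 1)) hy.le]
    · nlinarith [mul_pos (mul_self_pos.2 h) hy, mul_nonneg (mul_self_nonneg (v 0)) hx.le]
  exact (betaB_self_nonpos hw₀ hw₁).not_gt hpos

lemma det01_mulVec_pos_iff {g : Mat d} (hg : g ∈ Gset d) {x y : Vd d}
    (hx : 0 < betaB d x x) (hy : 0 < betaB d y y) (hxy : betaB d x y = 0) :
    0 < det01 (g *ᵥ x) (g *ᵥ y) ↔ 0 < det01 x y := by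
  set F : Mat d → ℝ := fun a => det01 (a *ᵥ x) (a *ᵥ y)
  have hF : Continuous F := by unfold F det01; fun_prop
  have hF0 : ∀ a ∈ Gset d, F a ≠ 0 := fun a ha => by
    have hO := (Gset_subset_Obeta ha).2
    exact det01_ne_zero (by rwa [hO]) (by rwa [hO]) (by rwa [hO])
  have h1 : F 1 = det01 x y := by simp only [F, one_mulVec]
  rw [← h1]
  have hpc : IsPreconnected (Gset d) := isPreconnected_connectedComponentIn
  exact ⟨hpc.pos_of_pos hF.continuousOn hF0 hg one_mem_Gset,
    hpc.pos_of_pos hF.continuousOn hF0 one_mem_Gset hg⟩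

lemma mulVec_mem_Vplus_iff (hd : 1 ≤ d) {g : Mat d} (hg : g ∈ Gset d) {x y : Vd d}
    (hx : betaB d x x = 1) (hgx : g *ᵥ x = evec d 0) :
    g *ᵥ y ∈ Vplus d ↔ betaB d x y = 0 ∧ 0 < betaB d y y ∧ 0 < det01 x y := by
  have hO := (Gset_subset_Obeta hg).2
  have hdet : det01 (g *ᵥ x) (g *ᵥ y) = (g *ᵥ y) 1 := by rw [hgx, det01_evec_zero_left hd]
  change betaB d _ _ = 0 ∧ 0 < betaB d _ _ ∧ 0 < betaB d _ _ ↔ _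
  rw [← hgx, hO, hO, betaB_evec_one_right, ← hdet]
  refine and_congr_right fun hxy => and_congr_right fun hy => ?_
  exact det01_mulVec_pos_iff hg (by rw [hx]; exact one_pos) hy hxy

lemma posPair_iff (hd : 1 ≤ d) {x y : Vd d} :
    posPair d x y ↔
      betaB d x x = 1 ∧ betaB d x y = 0 ∧ 0 < betaB d y y ∧ 0 < det01 x y := by
  constructor
  · rintro ⟨g, hg, hgx, hgy⟩
    have hx : betaB d x x = 1 := by
      rw [← (Gset_subset_Obeta hg).2, hgx, betaB_evec_zero_left, evec_self]
    exact ⟨hx, (mulVec_mem_Vplus_iff hd hg hx hgx).1 hgy⟩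
  · rintro ⟨hx, hy⟩
    obtain ⟨g, hg, hgx⟩ := exists_mem_Gset_mulVec_eq_evec_zero hd hx
    exact ⟨g, hg, hgx, (mulVec_mem_Vplus_iff hd hg hx hgx).2 hy⟩

lemma mem_TubePlus_iff (hd : 1 ≤ d) {p : Vd d × Vd d} :
    p ∈ TubePlus d ↔ betaB d p.1 p.1 - betaB d p.2 p.2 = 1 ∧ betaB d p.1 p.2 = 0 ∧
      0 < betaB d p.2 p.2 ∧ 0 < det01 p.1 p.2 := by
  obtain ⟨x, y⟩ := p
  simp only [TubePlus, TubeSrc, Set.mem_ofPred_eq, posPair_iff hd, betaB_smul_left,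
    betaB_smul_right, det01_smul]
  constructor
  · rintro ⟨⟨hxy, hxy', hy⟩, -, -, -, hdet⟩
    exact ⟨hxy, hxy', hy, pos_of_mul_pos_right hdet (sq_nonneg _)⟩
  · rintro ⟨hxy, hxy', hy, hdet⟩
    have hx : 0 < betaB d x x := by linarith
    have hs : 0 < √(betaB d x x) := Real.sqrt_pos.2 hx
    refine ⟨⟨hxy, hxy', hy⟩, ?_, by rw [hxy', mul_zero, mul_zero], by positivity,
      by positivity⟩
    field_simp
    exact (Real.sq_sqrt hx.le).symm

lemma hmat_mulVec (hd : 2 ≤ d) (x : Vd d) :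
    hmat d *ᵥ x = x 2 • evec d 1 + x 1 • evec d 2 := by
  have hsingle : hmat d = single 1 2 1 + single 2 1 1 := by
    ext i j
    have h21 := fin_two_ne_one hd
    simp only [hmat, of_apply, Matrix.add_apply, single, val_eq_one_iff (by omega : 1 ≤ d),
      val_eq_two_iff hd]
    aesop
  have hevec : ∀ i, evec d i = Pi.single i 1 := fun i => by
    funext j; simp [evec, Pi.single_apply]
  rw [hsingle, add_mulVec, single_mulVec_eq, single_mulVec_eq, hevec, hevec, one_mul, one_mul]

lemma alphaIt_eq (hd : 2 ≤ d) (t : ℝ) (x : Vd d) :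
    alphaIt d t x = (x + (Real.cos t - 1) • (x 1 • evec d 1 + x 2 • evec d 2),
      Real.sin t • (x 2 • evec d 1 + x 1 • evec d 2)) := by
  have h21 := fin_two_ne_one hd
  ext j <;> by_cases h1 : j = 1 <;> by_cases h2 : j = 2 <;>
    simp [alphaIt, val_eq_one_iff (by omega : 1 ≤ d), val_eq_two_iff hd, evec, h1, h2, h21,
      h21.symm] <;> ring

lemma mem_WplusDom_iff (hd : 2 ≤ d) {x : Vd d} :
    x ∈ WplusDom d ↔ betaB d x x = 1 ∧ x 1 ^ 2 < x 2 ^ 2 ∧ 0 < x 0 * x 2 := by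
  obtain ⟨h0, h1, h2⟩ := evec_one_two_apply hd (x 2) (x 1)
  simp only [WplusDom, AdS, Set.mem_ofPred_eq, posPair_iff (by omega : 1 ≤ d), hmat_mulVec hd,
    betaB_comm x, betaB_evec_one_two_left hd, det01, h0, h1, h2]
  constructor
  · rintro ⟨hx, -, -, hQ, hdet⟩
    exact ⟨hx, by nlinarith, by linarith⟩
  · rintro ⟨hx, hQ, hdet⟩
    exact ⟨hx, hx, by ring, by nlinarith, by linarith⟩

lemma alphaIt_mem_TubePlus_iff (hd : 2 ≤ d) {x : Vd d} (hx : betaB d x x = 1) {t : ℝ}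
    (ht : 0 < Real.sin t) :
    alphaIt d t x ∈ TubePlus d ↔ x 1 ^ 2 < x 2 ^ 2 ∧ 0 < x 0 * x 2 := by
  obtain ⟨hP0, hP1, hP2⟩ := evec_one_two_apply hd (x 1) (x 2)
  obtain ⟨hQ0, hQ1, hQ2⟩ := evec_one_two_apply hd (x 2) (x 1)
  rw [alphaIt_eq hd, mem_TubePlus_iff (by omega : 1 ≤ d)]
  set P := x 1 • evec d 1 + x 2 • evec d 2
  set Q := x 2 • evec d 1 + x 1 • evec d 2
  have hPx : betaB d P x = x 1 ^ 2 - x 2 ^ 2 := by rw [betaB_evec_one_two_left hd]; ring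
  have hPP : betaB d P P = x 1 ^ 2 - x 2 ^ 2 := by
    rw [betaB_evec_one_two_left hd, hP1, hP2]; ring
  have hQx : betaB d Q x = 0 := by rw [betaB_evec_one_two_left hd]; ring
  have hQP : betaB d Q P = 0 := by rw [betaB_evec_one_two_left hd, hP1, hP2]; ring
  have hQQ : betaB d Q Q = x 2 ^ 2 - x 1 ^ 2 := by
    rw [betaB_evec_one_two_left hd, hQ1, hQ2]; ring
  simp only [betaB_add_left, betaB_add_right, betaB_smul_left, betaB_smul_right, betaB_comm x,
    betaB_comm P Q, hx, hPx, hPP, hQx, hQP, hQQ, det01, Pi.add_apply, Pi.smul_apply,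
    smul_eq_mul, hP0, hP1, hQ0, hQ1, mul_zero, add_zero, sub_zero]
  constructor
  · rintro ⟨-, -, hQ, hdet⟩
    exact ⟨by nlinarith [mul_pos ht ht], by nlinarith⟩
  · rintro ⟨hQ, hdet⟩
    exact ⟨by linear_combination (x 1 ^ 2 - x 2 ^ 2) * Real.sin_sq_add_cos_sq t, trivial,
      mul_pos ht (mul_pos ht (by linarith)), by nlinarith⟩

lemma mem_KMSdom_iff (hd : 2 ≤ d) {x : Vd d} :
    x ∈ KMSdom d ↔ betaB d x x = 1 ∧ x 1 ^ 2 < x 2 ^ 2 ∧ 0 < x 0 * x 2 := by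
  refine ⟨fun ⟨hx, hα⟩ => ⟨hx, ?_⟩, fun ⟨hx, hW⟩ => ⟨hx, fun t ht₀ htπ => ?_⟩⟩
  · have hπ : Real.pi / 2 < Real.pi := by linarith [Real.pi_pos]
    exact (alphaIt_mem_TubePlus_iff hd hx (by simp)).1 (hα _ (by positivity) hπ)
  · exact (alphaIt_mem_TubePlus_iff hd hx (Real.sin_pos_of_pos_of_lt_pi ht₀ htπ)).2 hW

end AntiDeSitter

/-- The KMS wedge domain and the positivity domain on `AdS^d` coincide. -/
theorem stmt12 (d : ℕ) (hd : 2 ≤ d) : KMSdom d = WplusDom d := by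
  ext x
  rw [AntiDeSitter.mem_KMSdom_iff hd, AntiDeSitter.mem_WplusDom_iff hd]
end
end
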